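/- Let G be a gap sequence of genus g, 0 ≤ k ≤ g−1, and let m_k and a^{(k)}_1,...,a^{(k)}_{m_k} be the associated data. Then a^{(k)}_1 > a^{(k)}_2 > ⋯ > a^{(k)}_{m_k} ≥ 1, and every a^{(k)}_i belongs to G. -/

import Mathlib

open MvPolynomial

/-- The polynomial `p_n(t)` defined by `exp(Σ_{n≥1} t_n k^n) = Σ_{n≥0} p_n(t) k^n`,
as a polynomial in the variables `t_1, t_2, ...` (variable `X n` stands for `t_n`). -/
noncomputable def pS (n : ℕ) : MvPolynomial ℕ ℚ :=
  ∑ m ∈ Finset.range (n + 1), (Nat.factorial m : ℚ)⁻¹ •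
    ∑ c ∈ Finset.univ.filter
        (fun c : Fin m → Fin (n + 1) =>
          (∑ j, ((c j : ℕ))) = n ∧ ∀ j, 1 ≤ (c j : ℕ)),
      ∏ j, X ((c j : ℕ))

/-- `p_n` for `n : ℤ`, with `p_n = 0` for `n < 0`. -/
noncomputable def pz (n : ℤ) : MvPolynomial ℕ ℚ :=
  if 0 ≤ n then pS n.toNat else 0

/-- The Schur function `s_λ(t) = det(p_{λ_i - i + j})_{1 ≤ i,j ≤ l}` (here `0`-indexed). -/
noncomputable def schur {l : ℕ} (lam : Fin l → ℕ) : MvPolynomial ℕ ℚ :=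
  Matrix.det (Matrix.of fun a b : Fin l =>
    pz ((lam a : ℤ) - ((a : ℕ) : ℤ) + ((b : ℕ) : ℤ)))

/-- Substitution `t_n ↦ (x_1^n + ⋯ + x_k^n)/n`, i.e. `t = [x_1] + ⋯ + [x_k]`. -/
noncomputable def toPowerSums (k : ℕ) (f : MvPolynomial ℕ ℚ) : MvPolynomial (Fin k) ℚ :=
  aeval (fun n : ℕ => (n : ℚ)⁻¹ • ∑ i : Fin k, X i ^ n) f

/-- Iterated partial derivative `∂_{i_1} ⋯ ∂_{i_r}` for a list `L = [i_1, ..., i_r]`. -/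
noncomputable def derivs (L : List ℕ) (f : MvPolynomial ℕ ℚ) : MvPolynomial ℕ ℚ :=
  L.foldr (fun i g => pderiv i g) f

/-- The entries of a partition `λ` padded by zeros (`0`-indexed). -/
def pad {l : ℕ} (lam : Fin l → ℕ) (a : ℕ) : ℕ := if h : a < l then lam ⟨a, h⟩ else 0

/-- `w_i`: the `(i+1)`-st smallest element of `G` (0-indexed: `wseq G 0 = w_1`). -/
def wseq (G : Finset ℕ) (i : ℕ) : ℕ := (G.sort (· ≤ ·)).getD i 0

/-- `w_i^*`: the `(i+1)`-st smallest element of the complement of `G`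
(0-indexed: `wstar G 0 = w_1^* = 0`). -/
noncomputable def wstar (G : Finset ℕ) (i : ℕ) : ℕ := Nat.nth (fun n => n ∉ G) i

/-- `m_k = #{i : w_i^* < g - k}`, the number of non-gaps below `g - k`. -/
def gapm (G : Finset ℕ) (g k : ℕ) : ℕ :=
  ((Finset.range (g - k)).filter (fun n => n ∉ G)).card

/-- `a^{(k)}_{j+1} = w_{g-k-j} - w_{j+1}^*` (0-indexed in `j`, `0 ≤ j < m_k`). -/
noncomputable def gapa (G : Finset ℕ) (g k j : ℕ) : ℕ :=
  wseq G (g - k - j - 1) - wstar G j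

/-- The partition associated to the gap sequence `G`:
`λ = (w_g, ..., w_1) - (g-1, ..., 1, 0)`, i.e. `λ_{a+1} = w_{g-a} - (g-1-a)` (0-indexed `a`). -/
def gapPart (G : Finset ℕ) (g a : ℕ) : ℕ := wseq G (g - 1 - a) - (g - 1 - a)

/-!
Let `n = g - k`. For `1 ≤ i ≤ m_k` the non-gap `w*_i` is `< n` and lies strictly below the gap
`w_{n-i+1}`: otherwise the `n - i + 1` gaps `w_1, …, w_{n-i+1}` and the `i` non-gaps
`w*_1, …, w*_i` would be `n + 1` distinct numbers below `n`. Hence `a_i = w_{n-i+1} - w*_i ≥ 1`,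
and `a_i` strictly decreases in `i` because `w_{n-i+1}` decreases while `w*_i` increases.
Finally `a_i` is a gap: otherwise `a_i + w*_i = w_{n-i+1}` would be a sum of non-gaps.
-/

theorem Nat.count_add_count_not (p : ℕ → Prop) [DecidablePred p] (n : ℕ) :
    Nat.count p n + Nat.count (fun x => ¬p x) n = n := by
  rw [Nat.count_eq_card_filter_range, Nat.count_eq_card_filter_range,
    Finset.card_filter_add_card_filter_not, Finset.card_range]

lemma setOf_mem_finite (G : Finset ℕ) : (Set.ofPred (· ∈ G)).Finite := G.finite_toSet

lemma toFinset_setOf_mem (G : Finset ℕ) : (setOf_mem_finite G).toFinset = G := by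
  ext; simp [Set.ofPred]

lemma setOf_notMem_infinite (G : Finset ℕ) : (Set.ofPred (· ∉ G)).Infinite :=
  G.finite_toSet.infinite_compl

lemma wseq_eq_nth (G : Finset ℕ) (i : ℕ) : wseq G i = Nat.nth (· ∈ G) i := by
  rw [Nat.nth_eq_getD_sort (setOf_mem_finite G), toFinset_setOf_mem, wseq]

section

variable {G : Finset ℕ}

lemma wseq_mem {i : ℕ} (hi : i < G.card) : wseq G i ∈ G := by
  rw [wseq_eq_nth]
  exact Nat.nth_mem_of_lt_card (setOf_mem_finite G) (by rwa [toFinset_setOf_mem])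

lemma wseq_lt_wseq {i j : ℕ} (hij : i < j) (hj : j < G.card) : wseq G i < wseq G j := by
  simp only [wseq_eq_nth]
  exact Nat.nth_lt_nth_of_lt_card (setOf_mem_finite G) hij (by rwa [toFinset_setOf_mem])

lemma count_wseq {i : ℕ} (hi : i < G.card) : Nat.count (· ∈ G) (wseq G i) = i := by
  rw [wseq_eq_nth]
  exact Nat.count_nth_of_lt_card_finite (setOf_mem_finite G) (by rwa [toFinset_setOf_mem])

lemma wstar_notMem (G : Finset ℕ) (j : ℕ) : wstar G j ∉ G :=
  Nat.nth_mem_of_infinite (setOf_notMem_infinite G) j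

lemma wstar_lt_wstar {i j : ℕ} (hij : i < j) : wstar G i < wstar G j :=
  (Nat.nth_lt_nth (setOf_notMem_infinite G)).2 hij

lemma count_wstar (G : Finset ℕ) (j : ℕ) : Nat.count (· ∉ G) (wstar G j) = j :=
  Nat.count_nth_of_infinite (setOf_notMem_infinite G) j

lemma gapm_eq_count (G : Finset ℕ) (g k : ℕ) : gapm G g k = Nat.count (· ∉ G) (g - k) := by
  rw [gapm, Nat.count_eq_card_filter_range]

lemma wstar_lt_wseq {n j : ℕ} (hn : n ≤ G.card) (hj : j < Nat.count (· ∉ G) n) :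
    wstar G j < wseq G (n - j - 1) := by
  have hjn : j < n := hj.trans_le (Nat.count_le _)
  have hs : wstar G j < n := Nat.nth_lt_of_lt_count hj
  by_contra! hle
  have hne : wseq G (n - j - 1) ≠ wstar G j :=
    fun h => wstar_notMem G j (h ▸ wseq_mem (by omega))
  have hgaps : n - j - 1 < Nat.count (· ∈ G) (wstar G j) := by
    rw [← count_wseq (G := G) (i := n - j - 1) (by omega)]
    exact Nat.count_strict_mono (wseq_mem (by omega)) (lt_of_le_of_ne hle hne)
  have hsplit := Nat.count_add_count_not (· ∈ G) (wstar G j)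
  rw [count_wstar] at hsplit
  omega

lemma sub_mem_of_notMem (hadd : ∀ a b : ℕ, a ∉ G → b ∉ G → a + b ∉ G) {a b : ℕ}
    (ha : a ∈ G) (hb : b ∉ G) (hba : b ≤ a) : a - b ∈ G := by
  by_contra h
  exact hadd _ _ h hb (by rwa [Nat.sub_add_cancel hba])

end

theorem statement3_general (g : ℕ) (G : Finset ℕ)
    (hcard : G.card = g)
    (hadd : ∀ a b : ℕ, a ∉ G → b ∉ G → a + b ∉ G)
    (k : ℕ) :
    (∀ i j : ℕ, i < j → j < gapm G g k → gapa G g k j < gapa G g k i)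
    ∧ (∀ j : ℕ, j < gapm G g k → 1 ≤ gapa G g k j)
    ∧ (∀ j : ℕ, j < gapm G g k → gapa G g k j ∈ G) := by
  have hm : gapm G g k ≤ g - k := gapm_eq_count G g k ▸ Nat.count_le _
  have key : ∀ j < gapm G g k, wstar G j < wseq G (g - k - j - 1) := fun j hj =>
    wstar_lt_wseq (by omega) (gapm_eq_count G g k ▸ hj)
  refine ⟨fun i j hij hj => ?_, fun j hj => ?_, fun j hj => ?_⟩
  · have hw : wseq G (g - k - j - 1) < wseq G (g - k - i - 1) :=
      wseq_lt_wseq (by omega) (by omega)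
    have := wstar_lt_wstar (G := G) hij
    have := key j hj
    unfold gapa
    omega
  · have := key j hj
    unfold gapa
    omega
  · exact sub_mem_of_notMem hadd (wseq_mem (by omega)) (wstar_notMem G j) (key j hj).le

/-- For a gap sequence `G` of genus `g` and `0 ≤ k ≤ g-1`:
`a^{(k)}_1 > a^{(k)}_2 > ⋯ > a^{(k)}_{m_k} ≥ 1`, and every `a^{(k)}_i` belongs to `G`. -/
theorem statement3 (g : ℕ) (hg : 1 ≤ g) (G : Finset ℕ)
    (hcard : G.card = g) (h0 : 0 ∉ G)
    (hadd : ∀ a b : ℕ, a ∉ G → b ∉ G → a + b ∉ G)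
    (k : ℕ) (hk : k < g) :
    (∀ i j : ℕ, i < j → j < gapm G g k → gapa G g k j < gapa G g k i)
    ∧ (∀ j : ℕ, j < gapm G g k → 1 ≤ gapa G g k j)
    ∧ (∀ j : ℕ, j < gapm G g k → gapa G g k j ∈ G) :=
  statement3_general g G hcard hadd k
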